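/- Let φ(x) = Q_1(x) = sqrt(4/(x²+1)) and φ' its derivative. Then ∫_ℝ [(1/16)φ² - (9/32)φ⁴ + (1/8)φ⁶ - (1/64)φ⁸ + (1/4)φ²(φ')²] dx = 0 (i.e. the real even part of Z^(3) integrates to zero, expressing P₂(q_{1/4,1}) = 0). -/

import Mathlib

/-!
With `w = (1 + x²)⁻¹` one has `φ² = 4w`, `φ' = -xφ/(1 + x²)` and `x²w = 1 - w`, so the density
is the polynomial `w/4 - 9w²/2 + 12w³ - 8w⁴` in `w`. Since `(x wⁿ)' = (1 - 2n) wⁿ + 2n wⁿ⁺¹`, this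
polynomial is the derivative of `x (-w/4 + 4w²/3 - 4w³/3)`, which tends to `0` at `±∞`.
-/

open MeasureTheory Real

noncomputable def phi1 (x : ℝ) : ℝ := Real.sqrt (4 / (x ^ 2 + 1))

open Filter Topology

lemma integrable_inv_one_add_sq_pow {n : ℕ} (hn : n ≠ 0) :
    Integrable fun x : ℝ => (1 + x ^ 2)⁻¹ ^ n := by
  refine integrable_inv_one_add_sq.mono' (by fun_prop (disch := positivity)) ?_
  filter_upwards with x
  have hw : 0 ≤ (1 + x ^ 2)⁻¹ := by positivity
  rw [norm_of_nonneg (by positivity)]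
  exact pow_le_of_le_one hw (inv_le_one_of_one_le₀ (by nlinarith)) hn

lemma hasDerivAt_mul_inv_one_add_sq_pow (n : ℕ) (x : ℝ) :
    HasDerivAt (fun x : ℝ => x * (1 + x ^ 2)⁻¹ ^ n)
      ((1 - 2 * n) * (1 + x ^ 2)⁻¹ ^ n + 2 * n * (1 + x ^ 2)⁻¹ ^ (n + 1)) x := by
  set w := (1 + x ^ 2)⁻¹
  have hw : HasDerivAt (fun x : ℝ => (1 + x ^ 2)⁻¹) (-2 * x * w ^ 2) x := by
    refine (((hasDerivAt_pow 2 x).const_add 1).fun_inv (by positivity)).congr_deriv ?_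
    simp only [w, inv_pow]
    norm_num
    ring
  have hxw : x ^ 2 * w = 1 - w := by
    simp only [w]
    field_simp
    ring
  refine ((hasDerivAt_id' x).fun_mul (hw.fun_pow n)).congr_deriv ?_
  rcases n with _ | n
  · simp
  · rw [Nat.add_sub_cancel]
    push_cast
    linear_combination (-2 * (n + 1) * w ^ (n + 1)) * hxw

lemma tendsto_mul_inv_one_add_sq_pow_cocompact {n : ℕ} (hn : n ≠ 0) :
    Tendsto (fun x : ℝ => x * (1 + x ^ 2)⁻¹ ^ n) (cocompact ℝ) (𝓝 0) := by
  refine squeeze_zero_norm (fun x => ?_) tendsto_norm_cocompact_atTop.inv_tendsto_atTop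
  have hw : 0 ≤ (1 + x ^ 2)⁻¹ := by positivity
  calc ‖x * (1 + x ^ 2)⁻¹ ^ n‖ = |x| * (1 + x ^ 2)⁻¹ ^ n := by
        rw [norm_mul, norm_pow, norm_of_nonneg hw, Real.norm_eq_abs]
    _ ≤ |x| * (1 + x ^ 2)⁻¹ :=
        mul_le_mul_of_nonneg_left (pow_le_of_le_one hw (inv_le_one_of_one_le₀ (by nlinarith)) hn)
          (abs_nonneg x)
    _ ≤ ‖x‖⁻¹ := by
        rcases eq_or_ne x 0 with rfl | hx
        · simp
        rw [Real.norm_eq_abs, ← div_eq_mul_inv, div_le_iff₀ (by positivity), ← sq_abs,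
          inv_mul_eq_div, le_div_iff₀ (abs_pos.mpr hx)]
        linarith

noncomputable def reZ3 (q : ℝ → ℝ) (x : ℝ) : ℝ :=
  (1 / 16) * q x ^ 2 - (9 / 32) * q x ^ 4 + (1 / 8) * q x ^ 6 - (1 / 64) * q x ^ 8
    + (1 / 4) * q x ^ 2 * deriv q x ^ 2

lemma phi1_sq (x : ℝ) : phi1 x ^ 2 = 4 * (1 + x ^ 2)⁻¹ := by
  rw [phi1, sq_sqrt (by positivity), add_comm, div_eq_mul_inv]

lemma hasDerivAt_phi1 (x : ℝ) : HasDerivAt phi1 (-x * phi1 x / (x ^ 2 + 1)) x := by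
  have hφ : phi1 x ≠ 0 := (sqrt_pos.mpr (by positivity)).ne'
  have hu : x ^ 2 + 1 ≠ 0 := by positivity
  refine (((hasDerivAt_const x (4 : ℝ)).fun_div ((hasDerivAt_pow 2 x).add_const 1) hu).sqrt
    (div_ne_zero four_ne_zero hu)).congr_deriv ?_
  rw [show √(4 / (x ^ 2 + 1)) = phi1 x from rfl]
  have h4 : phi1 x ^ 2 * (x ^ 2 + 1) = 4 := by rw [phi1_sq]; field_simp; ring
  field_simp
  norm_num
  linear_combination (-2 * x) * h4

lemma deriv_phi1_sq (x : ℝ) : deriv phi1 x ^ 2 = 4 * x ^ 2 * (1 + x ^ 2)⁻¹ ^ 3 := by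
  rw [(hasDerivAt_phi1 x).deriv, div_pow, mul_pow, phi1_sq, add_comm (x ^ 2), div_eq_mul_inv,
    ← inv_pow]
  ring

lemma reZ3_phi1 (x : ℝ) :
    reZ3 phi1 x = (1 + x ^ 2)⁻¹ / 4 - 9 / 2 * (1 + x ^ 2)⁻¹ ^ 2 + 12 * (1 + x ^ 2)⁻¹ ^ 3
      - 8 * (1 + x ^ 2)⁻¹ ^ 4 := by
  have hxw : x ^ 2 * (1 + x ^ 2)⁻¹ = 1 - (1 + x ^ 2)⁻¹ := by
    field_simp
    ring
  have hφ (k : ℕ) : phi1 x ^ (2 * k) = (4 * (1 + x ^ 2)⁻¹) ^ k := by rw [pow_mul, phi1_sq]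
  rw [reZ3, deriv_phi1_sq, hφ 1, hφ 2, hφ 3, hφ 4]
  linear_combination 4 * (1 + x ^ 2)⁻¹ ^ 3 * hxw

lemma integrable_reZ3_phi1 : Integrable (reZ3 phi1) := by
  have hw (n : ℕ) (hn : n ≠ 0) (c : ℝ) := (integrable_inv_one_add_sq_pow hn).const_mul c
  simp_rw [funext reZ3_phi1, div_eq_mul_inv, mul_comm _ (4 : ℝ)⁻¹]
  exact ((integrable_inv_one_add_sq.const_mul _ |>.sub (hw 2 two_ne_zero _)).add
    (hw 3 three_ne_zero _)).sub (hw 4 four_ne_zero _)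

theorem stmt_18 :
    ∫ x : ℝ,
      ((1 / 16) * (phi1 x) ^ 2 - (9 / 32) * (phi1 x) ^ 4 + (1 / 8) * (phi1 x) ^ 6
        - (1 / 64) * (phi1 x) ^ 8 + (1 / 4) * (phi1 x) ^ 2 * (deriv phi1 x) ^ 2) = 0 := by
  let F : ℝ → ℝ := fun x => -(1 / 4) * (x * (1 + x ^ 2)⁻¹ ^ 1) + 4 / 3 * (x * (1 + x ^ 2)⁻¹ ^ 2)
    - 4 / 3 * (x * (1 + x ^ 2)⁻¹ ^ 3)
  have hF (x : ℝ) : HasDerivAt F (reZ3 phi1 x) x := by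
    have h (n : ℕ) (c : ℝ) := (hasDerivAt_mul_inv_one_add_sq_pow n x).const_mul c
    refine (((h 1 _).add (h 2 _)).sub (h 3 _)).congr_deriv ?_
    rw [reZ3_phi1]
    push_cast
    ring
  have hF_lim : Tendsto F (cocompact ℝ) (𝓝 0) := by
    have h (n : ℕ) (hn : n ≠ 0) (c : ℝ) := (tendsto_mul_inv_one_add_sq_pow_cocompact hn).const_mul c
    simpa only [mul_zero, add_zero, sub_zero] using
      ((h 1 one_ne_zero (-(1 / 4))).add (h 2 two_ne_zero (4 / 3))).sub (h 3 three_ne_zero (4 / 3))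
  exact (integral_of_hasDerivAt_of_tendsto hF integrable_reZ3_phi1
    (hF_lim.mono_left atBot_le_cocompact) (hF_lim.mono_left atTop_le_cocompact)).trans (sub_self 0)
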